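/- arXiv:2505.01034 — 4 statements merged into one kernel-verified Lean document; each statement's English description precedes it below -/
import Mathlib

section
/- For every finite graph G on k ≥ 1 vertices and every integer n ≥ k, there exists a red/blue/purple colouring R ∪ B ∪ P of K_n such that: (1) the clique number of R ∪ P equals the clique number of G; (2) the clique number of B ∪ P equals the independence number α(R) of R, and α(R) ≤ ⌈n/k⌉ · α(G); (3) | |P| − e(G)·n²/k² | ≤ 3·e(G)·n/k; and (4) |R| ≤ e(G)·(n/k + 1), where e(G) is the number of edges of G. -/
/-- The independence number of a graph: the clique number of its complement. -/
noncomputable def indepNumber {V : Type*} (G : SimpleGraph V) : ℕ :=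
  Gᶜ.cliqueNum

/-- The Ramsey–Turán number `RT s x n`: the maximum number of edges of an `n`-vertex
`Kₛ`-free graph whose independence number is `< x`. -/
noncomputable def RT (s : ℕ) (x : ℝ) (n : ℕ) : ℕ :=
  sSup {m | ∃ G : SimpleGraph (Fin n),
    G.CliqueFree s ∧ (indepNumber G : ℝ) < x ∧ G.edgeSet.ncard = m}

/-- `R`, `B`, `P` form a red/blue/purple colouring of `K_n`: a partition of the
edge set of the complete graph into three graphs. -/
def IsRBP {n : ℕ} (R B P : SimpleGraph (Fin n)) : Prop :=
  R ⊔ B ⊔ P = ⊤ ∧ Disjoint R B ∧ Disjoint R P ∧ Disjoint B P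

/-- The colouring is `(s,t)`-free: `R ⊔ P` has no `s`-clique and `B ⊔ P` has no `t`-clique. -/
def IsSTFree {n : ℕ} (R B P : SimpleGraph (Fin n)) (s t : ℕ) : Prop :=
  (R ⊔ P).CliqueFree s ∧ (B ⊔ P).CliqueFree t

/-- The inverse Ramsey number: minimum independence number of an `n`-vertex `Kₛ`-free graph. -/
noncomputable def invRamsey (s n : ℕ) : ℕ :=
  sInf {a | ∃ G : SimpleGraph (Fin n), G.CliqueFree s ∧ indepNumber G = a}

/-- The Ramsey number `R(s,t)`. -/
noncomputable def ramseyNum (s t : ℕ) : ℕ :=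
  sInf {n | ∀ G : SimpleGraph (Fin n), ¬ G.CliqueFree s ∨ ¬ Gᶜ.CliqueFree t}

/-- The graph `P` is a matching: every vertex has at most one neighbour. -/
def IsMatchingGraph {n : ℕ} (P : SimpleGraph (Fin n)) : Prop :=
  ∀ v w w' : Fin n, P.Adj v w → P.Adj v w' → w = w'

/-!
Blow `G` up: the vertex `v < n` of `K_n` lies over the vertex `v % k` of `G`, in the block `v / k`.
Colour `uv` red if `u, v` lie over an edge of `G` in the same block, purple if they lie over an
edge of `G` in different blocks, and blue otherwise. Then `R ∪ P` is the blow-up of `G`, which has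
the clique number of `G`, and `B ∪ P` is the complement of `R`. Inside a block, `R` is an induced
subgraph of `G`, so an independent set of `R` meets each of the `⌈n/k⌉` blocks in at most `α(G)`
vertices. Each vertex of `G` has between `⌊n/k⌋` and `⌈n/k⌉` vertices over it, so
`e(G)⌊n/k⌋² ≤ |R| + |P| ≤ e(G)⌈n/k⌉²`, while `|R| ≤ e(G)⌈n/k⌉`.
-/

open Finset Function SimpleGraph

namespace SimpleGraph

variable {V α β γ : Type*}

lemma cliqueNum_le_of_hom [Finite β] {G : SimpleGraph α} {H : SimpleGraph β} (φ : G →g H) :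
    G.cliqueNum ≤ H.cliqueNum := by
  classical
  obtain ⟨s, hs⟩ := G.exists_isNClique_cliqueNum
  have hinj : Set.InjOn φ s := fun v hv w hw hvw => by
    by_contra hne
    exact H.irrefl (hvw ▸ φ.map_adj (hs.isClique hv hw hne))
  have hclique : H.IsClique (s.image φ) := by
    rintro _ hx _ hy hxy
    obtain ⟨v, hv, rfl⟩ := Finset.mem_image.1 hx
    obtain ⟨w, hw, rfl⟩ := Finset.mem_image.1 hy
    exact φ.map_adj (hs.isClique hv hw fun h => hxy (h ▸ rfl))
  calc G.cliqueNum = #s := hs.card_eq.symm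
    _ = #(s.image φ) := (card_image_of_injOn hinj).symm
    _ ≤ H.cliqueNum := hclique.card_le_cliqueNum

lemma cliqueNum_comap_of_surjective [Finite V] [Finite α] (G : SimpleGraph α) {f : V → α}
    (hf : Surjective f) : (G.comap f).cliqueNum = G.cliqueNum :=
  le_antisymm (cliqueNum_le_of_hom ⟨f, id⟩)
    (cliqueNum_le_of_hom ⟨surjInv hf, by simp [surjInv_eq hf]⟩)

lemma two_mul_ncard_edgeSet [Fintype V] (G : SimpleGraph V) :
    2 * G.edgeSet.ncard = Nat.card G.Dart := by
  classical
  rw [Nat.card_eq_fintype_card, dart_card_eq_twice_card_edges, ← coe_edgeFinset,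
    Set.ncard_coe_finset]

lemma ncard_edgeSet_le_comap [Fintype V] [Fintype α] [Finite γ] (G : SimpleGraph α)
    {f : V → α} {g : α × γ → V} (hg : Injective g) (hfg : ∀ x, f (g x) = x.1) :
    G.edgeSet.ncard * Nat.card γ ^ 2 ≤ (G.comap f).edgeSet.ncard := by
  classical
  let φ : G.Dart × γ × γ → (G.comap f).Dart := fun ⟨d, c, c'⟩ =>
    ⟨(g (d.fst, c), g (d.snd, c')), by simp [hfg, d.adj]⟩
  have hφ : Injective φ := by
    rintro ⟨d, c, c'⟩ ⟨d', e, e'⟩ h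
    have h1 := hg (congrArg (·.fst) h)
    have h2 := hg (congrArg (·.snd) h)
    simp only [Prod.mk.injEq] at h1 h2
    rw [Dart.ext _ _ (Prod.ext h1.1 h2.1), h1.2, h2.2]
  have := Nat.card_le_card_of_injective φ hφ
  rw [Nat.card_prod, Nat.card_prod, ← two_mul_ncard_edgeSet, ← two_mul_ncard_edgeSet] at this
  nlinarith

def blowUpRed (G : SimpleGraph α) (f : V → α) (b : V → β) : SimpleGraph V :=
  G.comap f \ (⊤ : SimpleGraph β).comap b

def blowUpPurple (G : SimpleGraph α) (f : V → α) (b : V → β) : SimpleGraph V :=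
  G.comap f ⊓ (⊤ : SimpleGraph β).comap b

lemma blowUpRed_sup_blowUpPurple (G : SimpleGraph α) (f : V → α) (b : V → β) :
    blowUpRed G f b ⊔ blowUpPurple G f b = G.comap f :=
  sup_sdiff_inf _ _

lemma disjoint_blowUpRed_blowUpPurple (G : SimpleGraph α) (f : V → α) (b : V → β) :
    Disjoint (blowUpRed G f b) (blowUpPurple G f b) :=
  disjoint_inf_sdiff.symm

lemma ncard_edgeSet_blowUpRed_add_blowUpPurple [Finite V] (G : SimpleGraph α) (f : V → α)
    (b : V → β) :
    (blowUpRed G f b).edgeSet.ncard + (blowUpPurple G f b).edgeSet.ncard =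
      (G.comap f).edgeSet.ncard := by
  rw [← blowUpRed_sup_blowUpPurple G f b, edgeSet_sup,
    Set.ncard_union_eq (disjoint_edgeSet.2 (disjoint_blowUpRed_blowUpPurple G f b))]

variable [Fintype V] [Fintype α] [Fintype β] {f : V → α} {b : V → β}

lemma ncard_edgeSet_comap_le (G : SimpleGraph α) (hfb : Injective fun v => (f v, b v)) :
    (G.comap f).edgeSet.ncard ≤ G.edgeSet.ncard * Nat.card β ^ 2 := by
  classical
  let φ : (G.comap f).Dart → G.Dart × β × β := fun d =>
    (⟨(f d.fst, f d.snd), d.adj⟩, b d.fst, b d.snd)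
  have hφ : Injective φ := by
    intro d d' h
    simp only [φ, Prod.mk.injEq, Dart.ext_iff] at h
    exact Dart.ext _ _ (Prod.ext (hfb (Prod.ext h.1.1 h.2.1)) (hfb (Prod.ext h.1.2 h.2.2)))
  have := Nat.card_le_card_of_injective φ hφ
  rw [Nat.card_prod, Nat.card_prod, ← two_mul_ncard_edgeSet, ← two_mul_ncard_edgeSet] at this
  nlinarith

lemma ncard_edgeSet_blowUpRed_le (G : SimpleGraph α) (hfb : Injective fun v => (f v, b v)) :
    (blowUpRed G f b).edgeSet.ncard ≤ G.edgeSet.ncard * Nat.card β := by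
  classical
  let φ : (blowUpRed G f b).Dart → G.Dart × β := fun d =>
    (⟨(f d.fst, f d.snd), d.adj.1⟩, b d.fst)
  have hφ : Injective φ := by
    intro d d' h
    have hd : b d.fst = b d.snd := not_not.1 d.adj.2
    have hd' : b d'.fst = b d'.snd := not_not.1 d'.adj.2
    simp only [φ, Prod.mk.injEq, Dart.ext_iff] at h
    exact Dart.ext _ _ (Prod.ext (hfb (Prod.ext h.1.1 h.2))
      (hfb (Prod.ext h.1.2 (hd.symm.trans (h.2.trans hd')))))
  have := Nat.card_le_card_of_injective φ hφ
  rw [Nat.card_prod, ← two_mul_ncard_edgeSet, ← two_mul_ncard_edgeSet] at this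
  nlinarith

omit [Fintype V] in
lemma indepNum_blowUpRed_le (G : SimpleGraph α) (hfb : Injective fun v => (f v, b v)) :
    (blowUpRed G f b).indepNum ≤ Fintype.card β * G.indepNum := by
  classical
  obtain ⟨s, hs⟩ := (blowUpRed G f b).exists_isNIndepSet_indepNum
  rw [← hs.card_eq, mul_comm]
  refine card_le_mul_card_image_of_maps_to (t := univ) (fun v _ => mem_univ (b v)) _ ?_
  intro c _
  set t := {v ∈ s | b v = c}
  have hinj : Set.InjOn f t := fun v hv w hw hvw => by
    simp only [coe_filter, Set.mem_ofPred_eq, t] at hv hw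
    exact hfb (Prod.ext hvw (hv.2.trans hw.2.symm))
  have hindep : G.IsIndepSet (t.image f) := by
    rintro _ hx _ hy hxy hadj
    obtain ⟨v, hv, rfl⟩ := Finset.mem_image.1 hx
    obtain ⟨w, hw, rfl⟩ := Finset.mem_image.1 hy
    simp only [mem_filter, t] at hv hw
    exact hs.isIndepSet hv.1 hw.1 (fun h => hxy (h ▸ rfl))
      ⟨hadj, fun hb => hb (hv.2.trans hw.2.symm)⟩
  calc #t = #(t.image f) := (card_image_of_injOn hinj).symm
    _ ≤ G.indepNum := hindep.card_le_indepNum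

end SimpleGraph

lemma compl_sup_sup_eq_compl {A : Type*} [BooleanAlgebra A] {a c : A} (h : Disjoint a c) :
    (a ⊔ c)ᶜ ⊔ c = aᶜ := by
  rw [sup_comm, compl_sup, sup_inf_left, sup_compl_eq_top, inf_top_eq,
    sup_eq_right.2 h.le_compl_left]

lemma isRBP_compl_sup {n : ℕ} {R P : SimpleGraph (Fin n)} (h : Disjoint R P) :
    IsRBP R (R ⊔ P)ᶜ P :=
  ⟨by rw [sup_right_comm, sup_compl_eq_top], disjoint_compl_right.mono_left le_sup_left, h,
    (disjoint_compl_right.mono_left le_sup_right).symm⟩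

lemma abs_sub_mul_sq_le {e r p x q L : ℝ} (he : 0 ≤ e) (hr : 0 ≤ r) (hx : 1 ≤ x)
    (hq : x - 1 ≤ q) (hL₀ : 0 ≤ L) (hL : L ≤ x + 1) (hrL : r ≤ e * L)
    (hupper : r + p ≤ e * L ^ 2) (hlower : e * q ^ 2 ≤ r + p) :
    |p - e * x ^ 2| ≤ 3 * e * x := by
  have hLsq : e * L ^ 2 ≤ e * (x + 1) ^ 2 := by gcongr
  have hqsq : e * (x - 1) ^ 2 ≤ e * q ^ 2 := by gcongr
  rw [abs_le]
  constructor <;> nlinarith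

lemma blowUp_edge_estimates {k n e r p : ℕ} (hk : 1 ≤ k) (hn : k ≤ n)
    (hred : r ≤ e * ⌈(n : ℝ) / k⌉₊) (hupper : r + p ≤ e * ⌈(n : ℝ) / k⌉₊ ^ 2)
    (hlower : e * (n / k) ^ 2 ≤ r + p) :
    |(p : ℝ) - e * n ^ 2 / k ^ 2| ≤ 3 * e * n / k ∧ (r : ℝ) ≤ e * ((n : ℝ) / k + 1) := by
  have hk₀ : (0 : ℝ) < k := by exact_mod_cast hk
  have hx : 1 ≤ (n : ℝ) / k := (one_le_div hk₀).2 (by exact_mod_cast hn)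
  have hq : (n : ℝ) / k - 1 ≤ (n / k : ℕ) := by
    have := Nat.lt_floor_add_one ((n : ℝ) / k)
    rw [Nat.floor_div_eq_div] at this
    linarith
  have hL : (⌈(n : ℝ) / k⌉₊ : ℝ) ≤ n / k + 1 := (Nat.ceil_lt_add_one (by positivity)).le
  have hredℝ : (r : ℝ) ≤ e * ⌈(n : ℝ) / k⌉₊ := by exact_mod_cast hred
  constructor
  · rw [show (e : ℝ) * n ^ 2 / k ^ 2 = e * (n / k) ^ 2 by ring,
      show 3 * (e : ℝ) * n / k = 3 * e * (n / k) by ring]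
    exact abs_sub_mul_sq_le (by positivity) (by positivity) hx hq (by positivity) hL hredℝ
      (by exact_mod_cast hupper) (by exact_mod_cast hlower)
  · calc (r : ℝ) ≤ e * ⌈(n : ℝ) / k⌉₊ := hredℝ
      _ ≤ e * (n / k + 1) := by gcongr

section ResidueAndBlock

variable {k n : ℕ}

def finMod (hk : 0 < k) (v : Fin n) : Fin k :=
  ⟨v % k, Nat.mod_lt _ hk⟩

def finDiv {L : ℕ} (hL : n ≤ k * L) (v : Fin n) : Fin L :=
  ⟨v / k, Nat.div_lt_of_lt_mul (v.2.trans_le hL)⟩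

def finAddMul (x : Fin k × Fin (n / k)) : Fin n :=
  ⟨x.1 + k * x.2, calc (x.1 : ℕ) + k * x.2 < k * (x.2 + 1) := by rw [mul_add_one]; omega
    _ ≤ k * (n / k) := Nat.mul_le_mul_left k x.2.2
    _ ≤ n := Nat.mul_div_le n k⟩

lemma finMod_surjective (hk : 0 < k) (hn : k ≤ n) : Function.Surjective (finMod (n := n) hk) :=
  fun i => ⟨⟨i, i.2.trans_le hn⟩, Fin.ext (Nat.mod_eq_of_lt i.2)⟩

lemma injective_finMod_finDiv (hk : 0 < k) {L : ℕ} (hL : n ≤ k * L) :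
    Function.Injective fun v : Fin n => (finMod hk v, finDiv hL v) := by
  intro v w h
  simp only [Prod.mk.injEq, finMod, finDiv, Fin.mk.injEq] at h
  rw [Fin.ext_iff, ← Nat.div_add_mod v k, ← Nat.div_add_mod w k, h.1, h.2]

lemma finMod_finAddMul (hk : 0 < k) (x : Fin k × Fin (n / k)) :
    finMod hk (finAddMul x) = x.1 :=
  Fin.ext (by simp [finMod, finAddMul, Nat.mod_eq_of_lt x.1.2])

lemma finAddMul_injective : Function.Injective (finAddMul (k := k) (n := n)) := by
  rintro ⟨i, a⟩ ⟨j, c⟩ h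
  have h' : (i : ℕ) + k * a = j + k * c := congrArg Fin.val h
  have hk : 0 < k := i.pos
  have hij : (i : ℕ) = j := by
    simpa [Nat.mod_eq_of_lt i.2, Nat.mod_eq_of_lt j.2] using congrArg (· % k) h'
  have hac : (a : ℕ) = c := by
    simpa [Nat.add_mul_div_left _ _ hk, Nat.div_eq_of_lt i.2, Nat.div_eq_of_lt j.2] using
      congrArg (· / k) h'
  rw [Fin.ext hij, Fin.ext hac]

end ResidueAndBlock

theorem statement1 (k : ℕ) (hk : 1 ≤ k) (G : SimpleGraph (Fin k)) (n : ℕ) (hn : k ≤ n) :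
    ∃ R B P : SimpleGraph (Fin n), IsRBP R B P ∧
      (R ⊔ P).cliqueNum = G.cliqueNum ∧
      (B ⊔ P).cliqueNum = indepNumber R ∧
      indepNumber R ≤ ⌈(n : ℝ) / k⌉₊ * indepNumber G ∧
      |(P.edgeSet.ncard : ℝ) - (G.edgeSet.ncard : ℝ) * n ^ 2 / k ^ 2| ≤
        3 * (G.edgeSet.ncard : ℝ) * n / k ∧
      (R.edgeSet.ncard : ℝ) ≤ (G.edgeSet.ncard : ℝ) * ((n : ℝ) / k + 1) := by
  have hnL : n ≤ k * ⌈(n : ℝ) / k⌉₊ := by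
    have hk₀ : (0 : ℝ) < k := by exact_mod_cast hk
    exact_mod_cast (div_le_iff₀' hk₀).1 (Nat.le_ceil ((n : ℝ) / k))
  set f := finMod (n := n) hk
  set b := finDiv hnL
  have hfb := injective_finMod_finDiv hk hnL
  have hRP := disjoint_blowUpRed_blowUpPurple G f b
  have hsum := ncard_edgeSet_blowUpRed_add_blowUpPurple G f b
  refine ⟨blowUpRed G f b, (blowUpRed G f b ⊔ blowUpPurple G f b)ᶜ, blowUpPurple G f b,
    isRBP_compl_sup hRP, ?_, ?_, ?_, blowUp_edge_estimates hk hn ?_ ?_ ?_⟩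
  · rw [blowUpRed_sup_blowUpPurple, cliqueNum_comap_of_surjective G (finMod_surjective hk hn)]
  · rw [compl_sup_sup_eq_compl hRP]
    rfl
  · simpa [indepNumber] using indepNum_blowUpRed_le G hfb
  · simpa using ncard_edgeSet_blowUpRed_le G hfb
  · simpa [hsum] using ncard_edgeSet_comap_le G hfb
  · simpa [hsum] using
      ncard_edgeSet_le_comap G (finAddMul_injective (n := n)) (finMod_finAddMul hk)
end

section
/- For every integer s ≥ 3 and every real c > 1/(s−1), there exist a constant C > 0 and n₀ such that for all n ≥ n₀ there exists an (s,⌈cn⌉)-free red/blue/purple colouring R ∪ B ∪ P of K_n with |P| ≥ RT(s,⌈cn⌉,n) − C·n. -/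
/-! Write `r = s - 1` and split the vertices `0, …, n-1` into consecutive blocks of size `r`
(by `v / r`) and into residue classes (by `v % r`). Colour an edge red if its ends share a block,
blue if they share a residue, and purple otherwise. Then red ∪ purple is the Turán graph `T(n,r)`,
which is `K_s`-free, while blue ∪ purple is properly coloured by the `≈ n/r < cn` blocks, so has
no `⌈cn⌉`-clique. By Turán's theorem `RT(s, ⌈cn⌉, n) ≤ e(T(n,r))`, and red has at most `rn`
edges, so purple has at least `e(T(n,r)) - rn` edges. -/

open SimpleGraph Finset

section Colouring

variable {n : ℕ} {X Y : SimpleGraph (Fin n)}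

lemma isRBP_sdiff_sdiff_inf (h : X ⊔ Y = ⊤) : IsRBP (Y \ X) (X \ Y) (Y ⊓ X) :=
  ⟨by rw [← sup_eq_sdiff_sup_sdiff_sup_inf, sup_comm, h], disjoint_sdiff_sdiff,
    disjoint_sdiff_self_left.mono_right inf_le_right,
    disjoint_sdiff_self_left.mono_right inf_le_left⟩

lemma isSTFree_sdiff_sdiff_inf {s t : ℕ} (hY : Y.CliqueFree s) (hX : X.CliqueFree t) :
    IsSTFree (Y \ X) (X \ Y) (Y ⊓ X) s t := by
  refine ⟨?_, ?_⟩
  · rwa [sup_comm, sup_inf_sdiff]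
  · rwa [inf_comm, sup_comm, sup_inf_sdiff]

end Colouring

section Comap

variable {V α β : Type*}

lemma comap_top_sup_comap_top_eq_top {f : V → α} {g : V → β}
    (h : Function.Injective fun v => (f v, g v)) :
    (⊤ : SimpleGraph α).comap f ⊔ (⊤ : SimpleGraph β).comap g = ⊤ := by
  ext v w
  simp only [sup_adj, comap_adj, top_adj]
  refine ⟨?_, fun hvw => ?_⟩
  · rintro (hf | hg) rfl <;> simp_all
  · by_contra! hfg
    exact hvw (h (Prod.ext hfg.1 hfg.2))

lemma comap_top_cliqueFree_of_lt (f : V → ℕ) {K t : ℕ} (hf : ∀ v, f v < K) (hK : K < t) :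
    ((⊤ : SimpleGraph ℕ).comap f).CliqueFree t :=
  Colorable.cliqueFree ⟨Coloring.mk (fun v => (⟨f v, hf v⟩ : Fin K))
    fun hvw h => hvw (congrArg Fin.val h)⟩ hK

lemma two_mul_card_edgeFinset_le_of_degree_le [Fintype V] {G : SimpleGraph V}
    [DecidableRel G.Adj] {d : ℕ} (h : ∀ v, G.degree v ≤ d) :
    2 * #G.edgeFinset ≤ Fintype.card V * d := by
  rw [← sum_degrees_eq_twice_card_edges]
  simpa using Finset.sum_le_sum fun v (_ : v ∈ univ) => h v

lemma ncard_edgeSet_eq_card_edgeFinset [Fintype V] (G : SimpleGraph V) [Fintype G.edgeSet] :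
    G.edgeSet.ncard = #G.edgeFinset := by
  rw [← coe_edgeFinset, Set.ncard_coe_finset]

lemma two_mul_ncard_edgeSet_compl_comap_top_le [Fintype V] [DecidableEq α] (f : V → α) {k : ℕ}
    (hf : ∀ a, #{v | f v = a} ≤ k) :
    2 * ((⊤ : SimpleGraph α).comap f)ᶜ.edgeSet.ncard ≤ Fintype.card V * k := by
  classical
  rw [ncard_edgeSet_eq_card_edgeFinset]
  refine two_mul_card_edgeFinset_le_of_degree_le fun v => (hf (f v)).trans' ?_
  rw [← card_neighborFinset_eq_degree]
  refine card_le_card fun w hw => ?_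
  simp_all [eq_comm]

lemma ncard_edgeSet_le_inf_add_sdiff [Finite V] (G H : SimpleGraph V) :
    G.edgeSet.ncard ≤ (G ⊓ H).edgeSet.ncard + (G \ H).edgeSet.ncard := by
  conv_lhs => rw [← sup_inf_sdiff G H]
  rw [edgeSet_sup]
  exact Set.ncard_union_le _ _

end Comap

lemma card_filter_div_eq_le (n : ℕ) {r : ℕ} (hr : 0 < r) (q : ℕ) :
    #{w : Fin n | (w : ℕ) / r = q} ≤ r := by
  calc #{w : Fin n | (w : ℕ) / r = q} ≤ #(range r) := by
        refine card_le_card_of_injOn (fun w => (w : ℕ) % r)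
          (fun w _ => by simpa using Nat.mod_lt _ hr) fun v hv w hw hvw => Fin.val_injective ?_
        simp only [coe_filter, Finset.mem_univ, true_and] at hv hw
        rw [← Nat.div_add_mod v r, ← Nat.div_add_mod w r, hv, hw]
        exact congrArg _ hvw
    _ = r := card_range r

lemma turanGraph_eq_comap_mod (n r : ℕ) :
    turanGraph n r = (⊤ : SimpleGraph ℕ).comap fun v : Fin n => (v : ℕ) % r := by
  ext v w
  simp [turanGraph_adj]

lemma comap_div_sup_turanGraph_eq_top (n r : ℕ) :
    (⊤ : SimpleGraph ℕ).comap (fun v : Fin n => (v : ℕ) / r) ⊔ turanGraph n r = ⊤ := by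
  rw [turanGraph_eq_comap_mod]
  refine comap_top_sup_comap_top_eq_top fun v w h => Fin.val_injective ?_
  rw [← Nat.div_add_mod v r, ← Nat.div_add_mod w r]
  simp_all

lemma RT_le_ncard_edgeSet_turanGraph (x : ℝ) (n : ℕ) {r : ℕ} (hr : 0 < r) :
    RT (r + 1) x n ≤ (turanGraph n r).edgeSet.ncard := by
  refine csSup_le' ?_
  rintro m ⟨G, hG, -, rfl⟩
  classical
  rw [ncard_edgeSet_eq_card_edgeFinset, ncard_edgeSet_eq_card_edgeFinset]
  exact (isTuranMaximal_turanGraph hr).2 hG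

lemma div_add_one_lt_ceil_mul {n r : ℕ} {c : ℝ} (hn : 1 < (c - 1 / r) * n) :
    n / r + 1 < ⌈c * n⌉₊ := by
  rw [Nat.lt_ceil]
  push_cast
  have : ((n / r : ℕ) : ℝ) ≤ n / r := Nat.cast_div_le
  rw [sub_mul, one_div_mul_eq_div] at hn
  linarith

theorem statement3 (s : ℕ) (hs : 3 ≤ s) (c : ℝ) (hc : 1 / ((s : ℝ) - 1) < c) :
    ∃ C : ℝ, 0 < C ∧ ∃ n₀ : ℕ, ∀ n : ℕ, n₀ ≤ n →
      ∃ R B P : SimpleGraph (Fin n), IsRBP R B P ∧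
        IsSTFree R B P s ⌈c * (n : ℝ)⌉₊ ∧
        (RT s (⌈c * (n : ℝ)⌉₊ : ℝ) n : ℝ) - C * n ≤ (P.edgeSet.ncard : ℝ) := by
  obtain ⟨r, rfl⟩ : ∃ r, s = r + 1 := ⟨s - 1, by omega⟩
  have hr : 0 < r := by omega
  have hε : 0 < c - 1 / r := by
    rw [Nat.cast_add_one, add_sub_cancel_right] at hc
    linarith
  refine ⟨r, by positivity, ⌈(c - 1 / r)⁻¹⌉₊ + 1, fun n hn => ?_⟩
  have hn : 1 < (c - 1 / r) * n := by
    rw [← inv_lt_iff_one_lt_mul₀' hε]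
    exact (Nat.le_ceil _).trans_lt (by exact_mod_cast hn)
  set X := (⊤ : SimpleGraph ℕ).comap fun v : Fin n => (v : ℕ) / r
  refine ⟨turanGraph n r \ X, X \ turanGraph n r, turanGraph n r ⊓ X,
    isRBP_sdiff_sdiff_inf (comap_div_sup_turanGraph_eq_top n r),
    isSTFree_sdiff_sdiff_inf (turanGraph_cliqueFree hr) (comap_top_cliqueFree_of_lt _
      (fun v => Nat.lt_succ_of_le (Nat.div_le_div_right v.2.le)) (div_add_one_lt_ceil_mul hn)), ?_⟩
  have hRT := RT_le_ncard_edgeSet_turanGraph (⌈c * (n : ℝ)⌉₊ : ℝ) n hr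
  have hsplit := ncard_edgeSet_le_inf_add_sdiff (turanGraph n r) X
  have hred : (turanGraph n r \ X).edgeSet.ncard ≤ Xᶜ.edgeSet.ncard :=
    Set.ncard_le_ncard (edgeSet_mono (sdiff_eq.trans_le inf_le_right))
  have hblocks := two_mul_ncard_edgeSet_compl_comap_top_le (fun v : Fin n => (v : ℕ) / r)
    (card_filter_div_eq_le n hr)
  rw [Fintype.card_fin] at hblocks
  have : RT (r + 1) (⌈c * (n : ℝ)⌉₊ : ℝ) n ≤ (turanGraph n r ⊓ X).edgeSet.ncard + r * n := by
    linarith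
  rw [sub_le_iff_le_add]
  exact_mod_cast this
end

section
/- For every real c with 1/3 < c < 1/2 there exist a constant C > 0 and n₀ such that for all n ≥ n₀ the following holds: set t = ⌈cn⌉ and let k be the unique integer satisfying k·n/(3k−1) ≤ t < (k−1)·n/(3k−4); then there exists a (3,t+1)-free red/blue/purple colouring R ∪ B ∪ P of K_n with |P| ≥ (1/2)·k(k−1)·n² − k(3k−4)·t·n + (1/2)·(3k−4)(3k−1)·t² − C·n. -/
/-!
Write `n = (3k-1)b + (3k-4)s` and `t = kb + (k-1)s` with `b, s ≥ 0`. Let `H` be the blow-up of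
the Andrásfai graph `Γ_k` (the Cayley graph of `ℤ/(3k-1)` with connection set `{k, …, 2k-1}`) in
which `b` blocks carry all `3k-1` residues and `s` blocks carry all residues except the poles
`0, k, 2k`. Colour the edges of `H` inside a block red, those between blocks purple, and the
non-edges of `H` blue. Then red ∪ purple `= H` is triangle-free because `Γ_k` is. A blue/purple
clique meets every block in an independent set of `Γ_k`; such a set lies in an arc of `k`
consecutive residues, and every such arc contains a pole, so the clique has at most `t` vertices.
Every residue has `k` neighbours in `Γ_k`, exactly one of them a pole except for the residue `k`,
which sees two; summing degrees gives `2 e(H) = n t - s b`, twice the claimed count, while only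
`O(kn)` edges of `H` are red. Finally `t ≥ cn` with `c > 1/3` forces `(3k-4)(3c-1) < 1`, which
bounds `k` in terms of `c`.
-/

open Finset SimpleGraph

namespace Fin

/-- `Fin` subtraction in a form that `omega` can use. -/
lemma val_sub_add_val_eq_or {n : ℕ} (a b : Fin n) :
    (a - b).val + b.val = a.val ∨ (a - b).val + b.val = a.val + n := by
  rcases le_or_gt b a with h | h
  · left; rw [coe_sub_iff_le.2 h]; omega
  · right; rw [coe_sub_iff_lt.2 h]; omega

lemma val_sub_left_injective {n : ℕ} (b : Fin n) :
    Function.Injective fun a : Fin n => (a - b).val :=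
  fun a a' h => Fin.ext <| by
    have := val_sub_add_val_eq_or a b
    have := val_sub_add_val_eq_or a' b
    simp only at h
    omega

end Fin

def andrasfai (k : ℕ) : SimpleGraph (Fin (3 * k - 1)) where
  Adj a b := k ≤ (b - a).val ∧ (b - a).val < 2 * k
  symm := ⟨fun a b h => by
    have := Fin.val_sub_add_val_eq_or a b
    have := Fin.val_sub_add_val_eq_or b a
    omega⟩
  loopless := ⟨fun a h => by
    have := Fin.val_sub_add_val_eq_or a a
    omega⟩

namespace andrasfai

variable {k : ℕ}

lemma adj_iff {a b : Fin (3 * k - 1)} :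
    (andrasfai k).Adj a b ↔ k ≤ (b - a).val ∧ (b - a).val < 2 * k := Iff.rfl

instance : DecidableRel (andrasfai k).Adj := fun _ _ => inferInstanceAs (Decidable (_ ∧ _))

lemma cliqueFree_three : (andrasfai k).CliqueFree 3 := by
  rintro s hs
  obtain ⟨a, b, c, hab, hac, hbc, -⟩ := is3Clique_iff.1 hs
  rw [adj_iff] at hab hac hbc
  have := Fin.val_sub_add_val_eq_or b a
  have := Fin.val_sub_add_val_eq_or c a
  have := Fin.val_sub_add_val_eq_or c b
  omega

lemma exists_forall_val_sub_lt_of_isIndepSet {T : Finset (Fin (3 * k - 1))}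
    (hT : (andrasfai k).IsIndepSet T) (hne : T.Nonempty) :
    ∃ r, ∀ y ∈ T, (y - r).val < k := by
  obtain ⟨x, hx⟩ := hne
  obtain ⟨r, hr, hmax⟩ := (T.filter fun r => (x - r).val < k).exists_max_image
    (fun r => (x - r).val) ⟨x, mem_filter.2 ⟨hx, by have := Fin.val_sub_add_val_eq_or x x; omega⟩⟩
  rw [mem_filter] at hr
  -- `r` is the element of `T` farthest behind `x` at distance `< k`; `T` lies in the arc from `r`.
  refine ⟨r, fun y hy => ?_⟩
  have nonadj : ∀ a ∈ T, ∀ b ∈ T, a.val = b.val ∨ ¬ (andrasfai k).Adj a b := fun a ha b hb =>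
    (eq_or_ne a b).imp (congrArg Fin.val) (hT ha hb)
  have hry := nonadj r hr.1 y hy
  have hxy := nonadj x hx y hy
  have hmaxy := fun h => hmax y (mem_filter.2 ⟨hy, h⟩)
  simp only [adj_iff] at hry hxy hmaxy
  have := Fin.val_sub_add_val_eq_or y r
  have := Fin.val_sub_add_val_eq_or y x
  have := Fin.val_sub_add_val_eq_or x y
  have := Fin.val_sub_add_val_eq_or x r
  omega

lemma card_le_of_isIndepSet {T : Finset (Fin (3 * k - 1))} (hT : (andrasfai k).IsIndepSet T) :
    T.card ≤ k := by
  rcases T.eq_empty_or_nonempty with rfl | hne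
  · simp
  obtain ⟨r, hr⟩ := exists_forall_val_sub_lt_of_isIndepSet hT hne
  calc T.card = (T.image fun y => (y - r).val).card :=
        (card_image_of_injective _ (Fin.val_sub_left_injective r)).symm
    _ ≤ (range k).card := card_le_card <| by
        simp only [subset_iff, mem_image, mem_range]
        rintro _ ⟨y, hy, rfl⟩
        exact hr y hy
    _ = k := card_range k

/-- Deleting the poles from `Γ_k` leaves a copy of `Γ_{k-1}`. -/
def poles (k : ℕ) : Finset (Fin (3 * k - 1)) := {j | j.val = 0 ∨ j.val = k ∨ j.val = 2 * k}

lemma poles_eq (hk : 2 ≤ k) :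
    poles k = {⟨0, by omega⟩, ⟨k, by omega⟩, ⟨2 * k, by omega⟩} := by
  ext j
  simp [poles, Fin.ext_iff]

lemma card_poles (hk : 2 ≤ k) : (poles k).card = 3 :=
  card_eq_three.2 ⟨_, _, _, by simp [Fin.ext_iff]; omega, by simp [Fin.ext_iff]; omega,
    by simp [Fin.ext_iff]; omega, poles_eq hk⟩

lemma exists_mem_poles_val_sub_lt (hk : 2 ≤ k) (r : Fin (3 * k - 1)) :
    ∃ p ∈ poles k, (p - r).val < k := by
  rw [poles_eq hk]
  by_cases h₁ : 0 < r.val ∧ r.val ≤ k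
  · refine ⟨⟨k, by omega⟩, by simp, ?_⟩
    have := Fin.val_sub_add_val_eq_or ⟨k, by omega⟩ r
    simp only at this
    omega
  by_cases h₂ : k < r.val ∧ r.val ≤ 2 * k
  · refine ⟨⟨2 * k, by omega⟩, by simp, ?_⟩
    have := Fin.val_sub_add_val_eq_or ⟨2 * k, by omega⟩ r
    simp only at this
    omega
  · refine ⟨⟨0, by omega⟩, by simp, ?_⟩
    have := Fin.val_sub_add_val_eq_or ⟨0, by omega⟩ r
    simp only at this
    omega

lemma card_le_sub_one_of_isIndepSet (hk : 2 ≤ k) {T : Finset (Fin (3 * k - 1))}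
    (hT : (andrasfai k).IsIndepSet T) (hTp : T ⊆ (poles k)ᶜ) : T.card ≤ k - 1 := by
  rcases T.eq_empty_or_nonempty with rfl | hne
  · simp
  obtain ⟨r, hr⟩ := exists_forall_val_sub_lt_of_isIndepSet hT hne
  obtain ⟨p, hp, hpr⟩ := exists_mem_poles_val_sub_lt hk r
  calc T.card = (T.image fun y => (y - r).val).card :=
        (card_image_of_injective _ (Fin.val_sub_left_injective r)).symm
    _ ≤ ((range k).erase (p - r).val).card := card_le_card <| by
        simp only [subset_iff, mem_image, mem_erase, mem_range]
        rintro _ ⟨y, hy, rfl⟩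
        refine ⟨fun h => ?_, hr y hy⟩
        have := Fin.val_sub_left_injective r h
        subst this
        exact mem_compl.1 (hTp hy) hp
    _ = k - 1 := by rw [card_erase_of_mem (mem_range.2 hpr), card_range]

lemma card_filter_adj (hk : 1 ≤ k) (r : Fin (3 * k - 1)) :
    #{y | (andrasfai k).Adj r y} = k := by
  refine (card_bij (fun y _ => (y - r).val) ?_ (fun y _ y' _ h => Fin.val_sub_left_injective r h)
    ?_).trans (by simp; omega : (Ico k (2 * k)).card = k)
  · intro y hy
    simpa [adj_iff] using hy
  · intro d hd
    rw [mem_Ico] at hd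
    have hy : (r + ⟨d, by omega⟩ - r).val = d := by
      have := Fin.val_sub_add_val_eq_or (r + ⟨d, by omega⟩) r
      have := Fin.val_add_eq_ite r ⟨d, by omega⟩
      simp only at this
      split_ifs at this <;> omega
    exact ⟨_, by simp [adj_iff, hy, hd], hy⟩

lemma card_filter_poles_adj (hk : 2 ≤ k) (r : Fin (3 * k - 1)) :
    #{p ∈ poles k | (andrasfai k).Adj r p} = if r.val = k then 2 else 1 := by
  rw [poles_eq hk, card_filter, sum_insert (by simp [Fin.ext_iff]; omega),
    sum_insert (by simp [Fin.ext_iff]; omega), sum_singleton]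
  simp only [adj_iff]
  have := Fin.val_sub_add_val_eq_or ⟨0, by omega⟩ r
  have := Fin.val_sub_add_val_eq_or ⟨k, by omega⟩ r
  have := Fin.val_sub_add_val_eq_or ⟨2 * k, by omega⟩ r
  simp only at *
  split_ifs <;> omega

end andrasfai

namespace SimpleGraph

variable {W α ι : Type*} (Γ : SimpleGraph α) (block : W → ι) (role : W → α)

lemma cliqueFree_comap {m : ℕ} (h : Γ.CliqueFree m) : (Γ.comap role).CliqueFree m := by
  by_contra hc
  obtain ⟨c⟩ := (not_cliqueFree_iff_top_isContained m).1 hc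
  let φ : completeGraph (Fin m) →g Γ := (⟨role, id⟩ : Γ.comap role →g Γ).comp c.toHom
  exact (not_cliqueFree_iff_top_isContained m).2 ⟨⟨φ, φ.injective_of_top_hom⟩⟩ h

lemma cliqueFree_compl_comap_sup_comap_top [Fintype ι] (A : ι → Finset α) (m : ι → ℕ)
    (hA : ∀ w, role w ∈ A (block w))
    (hinj : ∀ v w, block v = block w → role v = role w → v = w)
    (hm : ∀ g (T : Finset α), T ⊆ A g → Γ.IsIndepSet T → T.card ≤ m g) :
    ((Γ.comap role)ᶜ ⊔ (⊤ : SimpleGraph ι).comap block).CliqueFree (∑ g, m g + 1) := by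
  classical
  intro S hS
  have hfibre : ∀ g, #{w ∈ S | block w = g} ≤ m g := by
    intro g
    have hinjOn : Set.InjOn role ↑(S.filter (block · = g)) := fun v hv w hw =>
      hinj v w ((mem_filter.1 hv).2.trans (mem_filter.1 hw).2.symm)
    rw [← card_image_of_injOn hinjOn]
    refine hm g _ (fun y hy => ?_) ?_
    · obtain ⟨w, hw, rfl⟩ := mem_image.1 hy
      exact (mem_filter.1 hw).2 ▸ hA w
    · simp only [coe_image]
      rintro _ ⟨v, hv, rfl⟩ _ ⟨w, hw, rfl⟩ hne hadj
      rw [mem_coe, mem_filter] at hv hw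
      rcases hS.1 hv.1 hw.1 (fun h => hne (h ▸ rfl)) with hc | hd
      · exact (compl_adj _ _ _).1 hc |>.2 hadj
      · exact hd (hv.2.trans hw.2.symm)
  have := hS.2
  rw [card_eq_sum_card_fiberwise (fun w _ => mem_coe.2 (mem_univ (block w)))] at this
  have := sum_le_sum fun g (_ : g ∈ univ) => hfibre g
  omega

lemma two_mul_ncard_edgeSet_s7 {V : Type*} [Fintype V] (G : SimpleGraph V) [DecidableRel G.Adj] :
    2 * G.edgeSet.ncard = ∑ v, G.degree v := by
  rw [sum_degrees_eq_twice_card_edges, ← coe_edgeFinset, Set.ncard_coe_finset]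

lemma ncard_edgeSet_sdiff_add_ncard_edgeSet_inf {V : Type*} [Finite V] (G H : SimpleGraph V) :
    (G \ H).edgeSet.ncard + (G ⊓ H).edgeSet.ncard = G.edgeSet.ncard := by
  rw [← Set.ncard_union_eq (disjoint_edgeSet.2 (disjoint_sdiff_self_left.mono_right inf_le_right)),
    ← edgeSet_sup, sup_sdiff_inf]

lemma two_mul_ncard_edgeSet_sdiff_comap_top_le [Fintype W] [Fintype α]
    (hinj : ∀ v w, block v = block w → role v = role w → v = w) :
    2 * (Γ.comap role \ (⊤ : SimpleGraph ι).comap block).edgeSet.ncard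
      ≤ Fintype.card W * Fintype.card α := by
  classical
  rw [two_mul_ncard_edgeSet_s7, ← smul_eq_mul, ← card_univ, ← sum_const]
  refine sum_le_sum fun v _ => ?_
  rw [← card_neighborFinset_eq_degree]
  refine card_le_card_of_injOn role (fun _ _ => mem_univ _) fun w hw w' hw' => hinj w w' ?_
  simp only [mem_coe, mem_neighborFinset, sdiff_adj, comap_adj, top_adj, not_not] at hw hw'
  exact hw.2.symm.trans hw'.2

lemma sum_comp_snd_equiv_sigma [Fintype W] [Fintype ι] {A : ι → Finset α} (e : W ≃ Σ g, A g)
    {M : Type*} [AddCommMonoid M] (F : α → M) :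
    ∑ w, F (e w).2 = ∑ g, ∑ y ∈ A g, F y := by
  rw [e.sum_comp (fun x => F x.2), Fintype.sum_sigma]
  exact sum_congr rfl fun g _ => sum_coe_sort (A g) F

lemma degree_comap_eq_sum [Fintype W] [Fintype ι] {A : ι → Finset α} (e : W ≃ Σ g, A g)
    [DecidableRel Γ.Adj] (w : W) :
    (Γ.comap fun w => ((e w).2 : α)).degree w = ∑ g, #{y ∈ A g | Γ.Adj (e w).2 y} := by
  rw [← card_neighborFinset_eq_degree, neighborFinset_eq_filter, card_filter]
  simp only [comap_adj, card_filter]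
  exact sum_comp_snd_equiv_sigma e fun y => if Γ.Adj (e w).2 y then 1 else 0

end SimpleGraph

lemma isRBP_sdiff_compl_inf {n : ℕ} (H D : SimpleGraph (Fin n)) : IsRBP (H \ D) Hᶜ (H ⊓ D) :=
  ⟨by rw [sup_right_comm, sup_sdiff_inf, sup_compl_eq_top],
    disjoint_compl_right.mono_left sdiff_le,
    disjoint_sdiff_self_left.mono_right inf_le_right,
    disjoint_compl_left.mono_right inf_le_left⟩

namespace andrasfai

variable {k : ℕ}

def blockRoles (k b s : ℕ) : Fin b ⊕ Fin s → Finset (Fin (3 * k - 1)) :=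
  Sum.elim (fun _ => univ) (fun _ => (poles k)ᶜ)

lemma sum_blockRoles {b s : ℕ} {M : Type*} [AddCommMonoid M] (F : Fin (3 * k - 1) → M) :
    ∑ g, ∑ y ∈ blockRoles k b s g, F y = b • ∑ y, F y + s • ∑ y ∈ (poles k)ᶜ, F y := by
  simp [blockRoles, Fintype.sum_sum_type]

lemma sum_card_blockRoles (hk : 2 ≤ k) (b s : ℕ) :
    ∑ g, (blockRoles k b s g).card = (3 * k - 1) * b + (3 * k - 4) * s := by
  simp [blockRoles, Fintype.sum_sum_type, card_compl, card_poles hk]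
  rw [show 3 * k - 1 - 3 = 3 * k - 4 by omega]
  ring

lemma sum_card_filter_blockRoles_adj (hk : 2 ≤ k) (b s : ℕ) (r : Fin (3 * k - 1)) :
    ∑ g, #{y ∈ blockRoles k b s g | (andrasfai k).Adj r y} + s * (if r.val = k then 2 else 1)
      = (b + s) * k := by
  have hsplit : #{y ∈ (poles k)ᶜ | (andrasfai k).Adj r y} + #{y ∈ poles k | (andrasfai k).Adj r y}
      = k := by
    simp only [card_filter]
    rw [sum_compl_add_sum, ← card_filter, card_filter_adj (by omega)]
  have hblocks : ∑ g, #{y ∈ blockRoles k b s g | (andrasfai k).Adj r y}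
      = b * k + s * #{y ∈ (poles k)ᶜ | (andrasfai k).Adj r y} := by
    simp only [card_filter, sum_blockRoles, smul_eq_mul]
    rw [← card_filter, card_filter_adj (by omega)]
  rw [hblocks, ← card_filter_poles_adj hk, add_assoc, ← mul_add, hsplit, add_mul]

lemma sum_card_filter_blockRoles_val_eq (hk : 2 ≤ k) (b s : ℕ) :
    ∑ g, #{y ∈ blockRoles k b s g | y.val = k} = b := by
  have hkk : ∀ y : Fin (3 * k - 1), y.val = k ↔ y = ⟨k, by omega⟩ := fun y => by rw [Fin.ext_iff]
  have hpole : (⟨k, by omega⟩ : Fin (3 * k - 1)) ∈ poles k := by simp [poles]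
  simp only [card_filter, hkk]
  rw [sum_blockRoles]
  simp [hpole]

lemma two_mul_ncard_edgeSet_comap_add (hk : 2 ≤ k) {b s n : ℕ}
    (hn : (3 * k - 1) * b + (3 * k - 4) * s = n) (e : Fin n ≃ Σ g, blockRoles k b s g) :
    2 * ((andrasfai k).comap fun w => ((e w).2 : Fin (3 * k - 1))).edgeSet.ncard + s * (n + b)
      = n * ((b + s) * k) := by
  have hpoles : ∑ w, (if ((e w).2 : Fin (3 * k - 1)).val = k then 2 else 1) = n + b := by
    have hsum : ∀ A : Finset (Fin (3 * k - 1)),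
        ∑ y ∈ A, (if y.val = k then 2 else 1) = A.card + #{y ∈ A | y.val = k} := fun A => by
      rw [card_filter, card_eq_sum_ones, ← sum_add_distrib]
      exact sum_congr rfl fun y _ => by split_ifs <;> rfl
    rw [sum_comp_snd_equiv_sigma e fun y => if y.val = k then 2 else 1,
      sum_congr rfl fun g _ => hsum _, sum_add_distrib, sum_card_blockRoles hk, hn,
      sum_card_filter_blockRoles_val_eq hk]
  rw [two_mul_ncard_edgeSet_s7, ← hpoles, mul_sum, ← sum_add_distrib]
  simp only [degree_comap_eq_sum _ e, sum_card_filter_blockRoles_adj hk, sum_const, card_univ,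
    Fintype.card_fin, smul_eq_mul]

theorem exists_isRBP_isSTFree (hk : 2 ≤ k) {b s n : ℕ}
    (hn : (3 * k - 1) * b + (3 * k - 4) * s = n) :
    ∃ R B P : SimpleGraph (Fin n), IsRBP R B P ∧ IsSTFree R B P 3 (k * b + (k - 1) * s + 1) ∧
      n * (k * b + (k - 1) * s) ≤ 2 * P.edgeSet.ncard + n * (3 * k - 1) + s * b := by
  let e : Fin n ≃ Σ g, blockRoles k b s g :=
    (Fintype.equivFinOfCardEq (by simp [← hn, ← sum_card_blockRoles hk])).symm
  let role (w : Fin n) : Fin (3 * k - 1) := (e w).2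
  let block (w : Fin n) : Fin b ⊕ Fin s := (e w).1
  have hinj : ∀ v w, block v = block w → role v = role w → v = w := fun v w h h' =>
    e.injective (Sigma.subtype_ext h h')
  let H := (andrasfai k).comap role
  let D := (⊤ : SimpleGraph (Fin b ⊕ Fin s)).comap block
  refine ⟨H \ D, Hᶜ, H ⊓ D, isRBP_sdiff_compl_inf H D, ⟨?_, ?_⟩, ?_⟩
  · rw [sup_sdiff_inf]
    exact cliqueFree_comap _ role cliqueFree_three
  · have := cliqueFree_compl_comap_sup_comap_top (andrasfai k) block role (blockRoles k b s)
      (Sum.elim (fun _ => k) (fun _ => k - 1)) (fun w => (e w).2.2) hinj ?_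
    · simp only [Fintype.sum_sum_type, Sum.elim_inl, Sum.elim_inr, sum_const, card_univ,
        Fintype.card_fin, smul_eq_mul] at this
      rw [mul_comm k, mul_comm (k - 1)]
      exact this.anti (sup_le_sup_left inf_le_right _)
    · rintro (i | i) T hT hind
      · exact card_le_of_isIndepSet hind
      · exact card_le_sub_one_of_isIndepSet hk hind hT
  · have hred := two_mul_ncard_edgeSet_sdiff_comap_top_le (andrasfai k) block role hinj
    rw [Fintype.card_fin, Fintype.card_fin] at hred
    have hsplit := ncard_edgeSet_sdiff_add_ncard_edgeSet_inf H D
    have hH := two_mul_ncard_edgeSet_comap_add hk hn e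
    have hk1 : n * (k * b + (k - 1) * s) + n * s = n * ((b + s) * k) := by
      obtain ⟨j, rfl⟩ := Nat.exists_eq_add_of_le' (by omega : 1 ≤ k)
      simp only [Nat.add_sub_cancel]
      ring
    linarith

end andrasfai

lemma exists_block_counts {k n t : ℕ} (hk : 2 ≤ k) (h₁ : (k : ℝ) * n ≤ t * (3 * k - 1))
    (h₂ : (t : ℝ) * (3 * k - 4) ≤ (k - 1) * n) :
    ∃ b s : ℕ, (3 * k - 1) * b + (3 * k - 4) * s = n ∧ k * b + (k - 1) * s = t := by
  have hk₁ : 1 ≤ k := by omega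
  have hk₃ : 1 ≤ 3 * k := by omega
  have hk₄ : 4 ≤ 3 * k := by omega
  have h₁' : k * n ≤ t * (3 * k - 1) := by rify [hk₃]; exact h₁
  have h₂' : t * (3 * k - 4) ≤ (k - 1) * n := by rify [hk₁, hk₄]; exact h₂
  refine ⟨(k - 1) * n - t * (3 * k - 4), t * (3 * k - 1) - k * n, ?_, ?_⟩ <;>
  · zify [h₁', h₂', hk₁, hk₃, hk₄]
    ring

lemma two_le_of_lt_div {c : ℝ} (hc : 1 / 3 < c) {n t k : ℕ} (hct : c * n ≤ t)
    (hk : (t : ℝ) < (k - 1) * n / (3 * k - 4)) : 2 ≤ k := by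
  have : (n : ℝ) ≤ 3 * (c * n) := by nlinarith [n.cast_nonneg (α := ℝ)]
  by_contra! h
  interval_cases k <;> norm_num at hk <;> linarith

lemma three_mul_sub_one_le {c : ℝ} (hc : 1 / 3 < c) {n t k : ℕ} (hk : 2 ≤ k) (hct : c * n ≤ t)
    (hkt : (t : ℝ) * (3 * k - 4) < (k - 1) * n) : 3 * (k : ℝ) - 1 ≤ 3 + 1 / (3 * c - 1) := by
  have hkR : (2 : ℝ) ≤ k := by exact_mod_cast hk
  rw [← sub_le_iff_le_add', le_div_iff₀ (by linarith)]
  nlinarith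

lemma blowUp_count_sub_le {k b s n t p : ℕ} {C : ℝ} (hk : 2 ≤ k)
    (hn : (3 * k - 1) * b + (3 * k - 4) * s = n) (ht : k * b + (k - 1) * s = t)
    (hp : n * (k * b + (k - 1) * s) ≤ 2 * p + n * (3 * k - 1) + s * b)
    (hC : 3 * (k : ℝ) - 1 ≤ 2 * C) :
    (1 / 2) * (k : ℝ) * ((k : ℝ) - 1) * (n : ℝ) ^ 2
      - (k : ℝ) * (3 * (k : ℝ) - 4) * (t : ℝ) * (n : ℝ)
      + (1 / 2) * (3 * (k : ℝ) - 4) * (3 * (k : ℝ) - 1) * (t : ℝ) ^ 2 - C * n ≤ p := by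
  rify [(by omega : 1 ≤ k), (by omega : 1 ≤ 3 * k), (by omega : 4 ≤ 3 * k)] at hn ht hp
  have hid : (1 / 2) * (k : ℝ) * ((k : ℝ) - 1) * (n : ℝ) ^ 2
      - (k : ℝ) * (3 * (k : ℝ) - 4) * (t : ℝ) * (n : ℝ)
      + (1 / 2) * (3 * (k : ℝ) - 4) * (3 * (k : ℝ) - 1) * (t : ℝ) ^ 2
      = (n * (k * b + (k - 1) * s) - s * b) / 2 := by
    rw [← hn, ← ht]; ring
  nlinarith [mul_le_mul_of_nonneg_right hC n.cast_nonneg]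

theorem statement7_general (c : ℝ) (hc1 : 1 / 3 < c) :
    ∃ C : ℝ, 0 < C ∧ ∃ n₀ : ℕ, ∀ n : ℕ, n₀ ≤ n →
      ∀ t : ℕ, t = ⌈c * (n : ℝ)⌉₊ →
      ∀ k : ℕ, (k : ℝ) * n / (3 * (k : ℝ) - 1) ≤ (t : ℝ) →
        (t : ℝ) < ((k : ℝ) - 1) * n / (3 * (k : ℝ) - 4) →
        ∃ R B P : SimpleGraph (Fin n), IsRBP R B P ∧
          IsSTFree R B P 3 (t + 1) ∧
          (1 / 2) * (k : ℝ) * ((k : ℝ) - 1) * (n : ℝ) ^ 2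
            - (k : ℝ) * (3 * (k : ℝ) - 4) * (t : ℝ) * (n : ℝ)
            + (1 / 2) * (3 * (k : ℝ) - 4) * (3 * (k : ℝ) - 1) * (t : ℝ) ^ 2 - C * n
            ≤ (P.edgeSet.ncard : ℝ) := by
  have hc : 0 < 3 * c - 1 := by linarith
  refine ⟨(3 + 1 / (3 * c - 1)) / 2, by positivity, 0, fun n _ t ht k hk₁ hk₂ => ?_⟩
  have hct : c * n ≤ t := ht ▸ Nat.le_ceil _
  have hk := two_le_of_lt_div hc1 hct hk₂
  have hkR : (2 : ℝ) ≤ k := by exact_mod_cast hk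
  rw [div_le_iff₀ (by linarith)] at hk₁
  rw [lt_div_iff₀ (by linarith)] at hk₂
  obtain ⟨b, s, hbs, htbs⟩ := exists_block_counts hk hk₁ hk₂.le
  obtain ⟨R, B, P, hRBP, hfree, hP⟩ := andrasfai.exists_isRBP_isSTFree hk hbs
  refine ⟨R, B, P, hRBP, htbs ▸ hfree, blowUp_count_sub_le hk hbs htbs hP ?_⟩
  linarith [three_mul_sub_one_le hc1 hk hct hk₂]

theorem statement7 (c : ℝ) (hc1 : 1 / 3 < c) (hc2 : c < 1 / 2) :
    ∃ C : ℝ, 0 < C ∧ ∃ n₀ : ℕ, ∀ n : ℕ, n₀ ≤ n →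
      ∀ t : ℕ, t = ⌈c * (n : ℝ)⌉₊ →
      ∀ k : ℕ, (k : ℝ) * n / (3 * (k : ℝ) - 1) ≤ (t : ℝ) →
        (t : ℝ) < ((k : ℝ) - 1) * n / (3 * (k : ℝ) - 4) →
        ∃ R B P : SimpleGraph (Fin n), IsRBP R B P ∧
          IsSTFree R B P 3 (t + 1) ∧
          (1 / 2) * (k : ℝ) * ((k : ℝ) - 1) * (n : ℝ) ^ 2
            - (k : ℝ) * (3 * (k : ℝ) - 4) * (t : ℝ) * (n : ℝ)
            + (1 / 2) * (3 * (k : ℝ) - 4) * (3 * (k : ℝ) - 1) * (t : ℝ) ^ 2 - C * n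
            ≤ (P.edgeSet.ncard : ℝ) :=
  statement7_general c hc1
end

section
/- There exists a real p > 0 such that for every integer s ≥ 3 there is an integer n₀ with the following property: for all n ≥ n₀ and every integer t with R⁻¹(s,n)·log₂ n ≤ t ≤ n, there exists an (s,t)-free red/blue/purple colouring R ∪ B ∪ P of K_n with |P| ≥ p · RT(s, t/log₂ n, n). -/
open Finset

namespace Nat

lemma mul_choose_le_choose_succ_succ {q n k : ℕ} (h : q * (k + 1) ≤ n + 1) :
    q * n.choose k ≤ (n + 1).choose (k + 1) := by
  refine Nat.le_of_mul_le_mul_right ?_ k.succ_pos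
  calc q * n.choose k * (k + 1) = q * (k + 1) * n.choose k := by ring
    _ ≤ (n + 1) * n.choose k := Nat.mul_le_mul_right _ h
    _ = (n + 1).choose (k + 1) * (k + 1) := add_one_mul_choose_eq n k

lemma pow_mul_choose_le_choose_add_add {q n k : ℕ} :
    ∀ m, q * (k + m) ≤ n + m → q ^ m * n.choose k ≤ (n + m).choose (k + m)
  | 0, _ => by simp
  | m + 1, h => by
    have h' : q * (k + m) ≤ n + m := by rcases q.eq_zero_or_pos with rfl | hq <;> nlinarith
    calc q ^ (m + 1) * n.choose k = q * (q ^ m * n.choose k) := by ring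
      _ ≤ q * (n + m).choose (k + m) :=
        Nat.mul_le_mul_left _ (pow_mul_choose_le_choose_add_add m h')
      _ ≤ (n + (m + 1)).choose (k + (m + 1)) := mul_choose_le_choose_succ_succ (by omega)

lemma choose_lt_two_pow_of_mul_logb_lt {n t c : ℕ} (hn : 0 < n)
    (h : t * Real.logb 2 n < c) : n.choose t < 2 ^ c := by
  have hreal : (n : ℝ) ^ t < 2 ^ c :=
    calc (n : ℝ) ^ t = (2 : ℝ) ^ (t * Real.logb 2 n) := by
          rw [mul_comm, Real.rpow_mul (by norm_num),
            Real.rpow_logb (by norm_num) (by norm_num) (by exact_mod_cast hn), Real.rpow_natCast]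
      _ < (2 : ℝ) ^ (c : ℝ) := Real.rpow_lt_rpow_of_exponent_lt (by norm_num) h
      _ = 2 ^ c := Real.rpow_natCast 2 c
  exact (choose_le_pow n t).trans_lt (by exact_mod_cast hreal)

lemma sq_le_two_mul_mul_add_sq_tsub {a d j : ℕ} (h : j ≤ d) :
    j ^ 2 ≤ 2 * a * d + (d - a) ^ 2 := by
  rcases le_total d a with hda | had
  · nlinarith
  · obtain ⟨c, rfl⟩ := Nat.exists_eq_add_of_le had
    rw [Nat.add_sub_cancel_left]
    nlinarith

end Nat

lemma mul_lt_three_mul_sq_sub_div {a t : ℕ} {L : ℝ} (ha : 1 ≤ a) (hL : 20 ≤ L)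
    (haL : a * L < t) : t * L < 3 * ((t - a) ^ 2 / (2 * a) : ℕ) := by
  set m := (t - a) ^ 2 / (2 * a)
  have hm : (t - a) ^ 2 < 2 * a * (m + 1) := Nat.lt_mul_div_succ _ (by omega)
  have ha' : (1 : ℝ) ≤ a := by exact_mod_cast ha
  have hta : 20 * (a : ℝ) < t := by nlinarith
  have hat : a ≤ t := by exact_mod_cast (by linarith : (a : ℝ) ≤ t)
  have hm' : ((t : ℝ) - a) ^ 2 < 2 * a * (m + 1) := by
    rw [← Nat.cast_sub hat]
    exact_mod_cast hm
  have ht2 : (t : ℝ) ^ 2 ≤ 3 * a * m := by nlinarith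
  nlinarith

namespace Finset

variable {α : Type*} [DecidableEq α] {E A : Finset α} {𝒜 : Finset (Finset α)} {q k m : ℕ}

lemma card_filter_superset_powersetCard_le (hAE : A ⊆ E) (hm : m ≤ #A) :
    #{P ∈ E.powersetCard k | A ⊆ P} ≤ (#E - m).choose (k - m) := by
  obtain ⟨B, hBA, hB⟩ := exists_subset_card_eq hm
  rw [← hB, ← card_sdiff_of_subset (hBA.trans hAE), ← card_powersetCard]
  refine card_le_card_of_injOn (· \ B) (fun P hP => ?_) (fun P hP Q hQ hPQ => ?_)
  · obtain ⟨hPk, hAP⟩ := mem_filter.mp hP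
    obtain ⟨hPE, rfl⟩ := mem_powersetCard.mp hPk
    exact mem_powersetCard.mpr
      ⟨sdiff_subset_sdiff hPE le_rfl, card_sdiff_of_subset (hBA.trans hAP)⟩
  · have hBP := hBA.trans (mem_filter.mp hP).2
    have hBQ := hBA.trans (mem_filter.mp hQ).2
    rw [← sdiff_union_of_subset hBP, ← sdiff_union_of_subset hBQ]
    exact congrArg (· ∪ B) hPQ

lemma exists_mem_powersetCard_forall_not_subset_of_mul_choose_lt
    (h𝒜 : ∀ A ∈ 𝒜, A ⊆ E ∧ m ≤ #A) (hlt : #𝒜 * (#E - m).choose (k - m) < (#E).choose k) :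
    ∃ P ∈ E.powersetCard k, ∀ A ∈ 𝒜, ¬A ⊆ P := by
  by_contra! hcover
  refine hlt.not_ge ?_
  calc (#E).choose k = #(E.powersetCard k) := (card_powersetCard k E).symm
    _ ≤ #(𝒜.biUnion fun A => {P ∈ E.powersetCard k | A ⊆ P}) := by
      refine card_le_card fun P hP => ?_
      obtain ⟨A, hA, hAP⟩ := hcover P hP
      exact mem_biUnion.mpr ⟨A, hA, mem_filter.mpr ⟨hP, hAP⟩⟩
    _ ≤ ∑ A ∈ 𝒜, #{P ∈ E.powersetCard k | A ⊆ P} := card_biUnion_le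
    _ ≤ #𝒜 * (#E - m).choose (k - m) := sum_le_card_nsmul _ _ _ fun A hA =>
      card_filter_superset_powersetCard_le (h𝒜 A hA).1 (h𝒜 A hA).2

theorem exists_mem_powersetCard_forall_not_subset (hq : 0 < q) (hk : q * k ≤ #E)
    (h𝒜 : ∀ A ∈ 𝒜, A ⊆ E ∧ m ≤ #A) (hcard : #𝒜 < q ^ m) :
    ∃ P ∈ E.powersetCard k, ∀ A ∈ 𝒜, ¬A ⊆ P := by
  have hkE : k ≤ #E := le_trans (Nat.le_mul_of_pos_left k hq) hk
  rcases lt_or_ge k m with hkm | hmk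
  · obtain ⟨P, hP⟩ := powersetCard_nonempty.mpr hkE
    refine ⟨P, hP, fun A hA hAP => ?_⟩
    have := card_le_card hAP
    have := (h𝒜 A hA).2
    have := (mem_powersetCard.mp hP).2
    omega
  · refine exists_mem_powersetCard_forall_not_subset_of_mul_choose_lt h𝒜 ?_
    have hratio := Nat.pow_mul_choose_le_choose_add_add (q := q) (n := #E - m) (k := k - m) m
      (by rwa [Nat.sub_add_cancel hmk, Nat.sub_add_cancel (hmk.trans hkE)])
    rw [Nat.sub_add_cancel hmk, Nat.sub_add_cancel (hmk.trans hkE)] at hratio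
    calc #𝒜 * (#E - m).choose (k - m) < q ^ m * (#E - m).choose (k - m) :=
          Nat.mul_lt_mul_of_pos_right hcard (Nat.choose_pos (by omega))
      _ ≤ (#E).choose k := hratio

end Finset

namespace SimpleGraph

variable {V : Type*}

section IndepSet

variable {G : SimpleGraph V}

lemma one_le_indepNum [Finite V] [Nonempty V] (G : SimpleGraph V) : 1 ≤ G.indepNum := by
  obtain ⟨v⟩ := ‹Nonempty V›
  simpa using (show G.IsIndepSet (({v} : Finset V) : Set V) by simp).card_le_indepNum

lemma cliqueFree_compl_of_indepNum_lt [Finite V] {t : ℕ} (h : G.indepNum < t) :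
    Gᶜ.CliqueFree t := fun K hK => by
  rw [isNClique_compl] at hK
  have := hK.isIndepSet.card_le_indepNum
  rw [hK.card_eq] at this
  omega

lemma exists_isIndepSet_forall_exists_adj [DecidableEq V] {S : Finset V} (hS : S.Nonempty) :
    ∃ I ⊆ S, I.Nonempty ∧ G.IsIndepSet I ∧ ∀ v ∈ S \ I, ∃ u ∈ I, G.Adj v u := by
  classical
  set F : Finset (Finset V) := {I ∈ S.powerset | G.IsIndepSet (I : Set V)}
  obtain ⟨I, hIF, hImax⟩ := exists_maximal (s := F) ⟨∅, by simp [F]⟩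
  rw [mem_filter, mem_powerset] at hIF
  have hdom : ∀ v ∈ S \ I, ∃ u ∈ I, G.Adj v u := by
    intro v hv
    rw [mem_sdiff] at hv
    by_contra! hv'
    have hins : insert v I ∈ F := by
      rw [mem_filter, mem_powerset, coe_insert]
      exact ⟨insert_subset hv.1 hIF.1,
        hIF.2.insert fun u hu _ => ⟨hv' u hu, fun h => hv' u hu h.symm⟩⟩
    exact hv.2 (hImax hins (subset_insert v I) (mem_insert_self v I))
  obtain ⟨v, hv⟩ := hS
  refine ⟨I, hIF.1, ?_, hIF.2, hdom⟩
  by_cases hvI : v ∈ I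
  · exact ⟨v, hvI⟩
  · obtain ⟨u, hu, -⟩ := hdom v (mem_sdiff.mpr ⟨hv, hvI⟩)
    exact ⟨u, hu⟩

end IndepSet

variable (G : SimpleGraph V) [DecidableRel G.Adj]

def edgesWithin (S : Finset V) : Finset (Sym2 V) := {e ∈ S.sym2 | e ∈ G.edgeSet}

variable {G}

lemma mem_edgesWithin {S : Finset V} {e : Sym2 V} :
    e ∈ G.edgesWithin S ↔ e ∈ S.sym2 ∧ e ∈ G.edgeSet :=
  mem_filter

lemma edgesWithin_mono {S T : Finset V} (h : S ⊆ T) : G.edgesWithin S ⊆ G.edgesWithin T :=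
  filter_subset_filter _ (sym2_mono h)

lemma edgesWithin_univ [Fintype V] [Fintype G.edgeSet] : G.edgesWithin univ = G.edgeFinset := by
  ext e
  simp [mem_edgesWithin]

lemma coe_edgesWithin_subset_edgeSet_of_isClique_compl_sup {P : SimpleGraph V} {K : Finset V}
    (hK : (Gᶜ ⊔ P).IsClique (K : Set V)) : (G.edgesWithin K : Set (Sym2 V)) ⊆ P.edgeSet := by
  intro e he
  induction e using Sym2.ind with
  | h x y =>
  obtain ⟨hxy, hG⟩ := mem_edgesWithin.mp he
  obtain ⟨hx, hy⟩ := mk_mem_sym2_iff.mp hxy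
  rcases hK (mem_coe.mpr hx) (mem_coe.mpr hy) (G.ne_of_adj hG) with h | h
  · exact absurd hG h.2
  · exact h

/-- Each vertex of `S \ I` has its own edge into `I`. -/
lemma card_sdiff_add_card_edgesWithin_sdiff_le [DecidableEq V] {I S : Finset V} (hIS : I ⊆ S)
    (hdom : ∀ v ∈ S \ I, ∃ u ∈ I, G.Adj v u) :
    #(S \ I) + #(G.edgesWithin (S \ I)) ≤ #(G.edgesWithin S) := by
  have hsub : G.edgesWithin (S \ I) ⊆ G.edgesWithin S := edgesWithin_mono sdiff_subset
  have hcross : #(S \ I) ≤ #(G.edgesWithin S \ G.edgesWithin (S \ I)) := by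
    refine card_le_card_of_forall_subsingleton (fun v e => ∃ u ∈ I, e = s(v, u))
      (fun v hv => ?_) (fun e _ => ?_)
    · obtain ⟨u, hu, hvu⟩ := hdom v hv
      refine ⟨s(v, u), mem_sdiff.mpr ⟨mem_edgesWithin.mpr ⟨?_, hvu⟩, fun h => ?_⟩, u, hu, rfl⟩
      · exact mk_mem_sym2_iff.mpr ⟨(mem_sdiff.mp hv).1, hIS hu⟩
      · exact (mem_sdiff.mp (mk_mem_sym2_iff.mp (mem_edgesWithin.mp h).1).2).2 hu
    · rintro v ⟨hv, u, hu, rfl⟩ w ⟨hw, u', hu', he⟩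
      rcases Sym2.eq_iff.mp he with ⟨h, -⟩ | ⟨-, h⟩
      · exact h
      · exact absurd (h ▸ hu) (mem_sdiff.mp hw).2
  rw [card_sdiff_of_subset hsub] at hcross
  have := card_le_card hsub
  omega

theorem sq_card_sub_le_two_mul_card_edgesWithin {a : ℕ}
    (ha : ∀ I : Finset V, G.IsIndepSet I → #I ≤ a) (S : Finset V) :
    (#S - a) ^ 2 ≤ 2 * a * #(G.edgesWithin S) := by
  classical
  induction S using Finset.strongInduction with
  | H S ih =>
  rcases le_or_gt #S a with hSa | hSa
  · simp [Nat.sub_eq_zero_of_le hSa]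
  obtain ⟨I, hIS, hIne, hI, hdom⟩ := exists_isIndepSet_forall_exists_adj (G := G) (S := S)
    (card_pos.mp (by omega))
  have hD := ih (S \ I) (sdiff_ssubset hIS hIne)
  have hDS : #S - a ≤ #(S \ I) := by
    rw [card_sdiff_of_subset hIS]
    have := ha I hI
    omega
  calc (#S - a) ^ 2 ≤ 2 * a * #(S \ I) + (#(S \ I) - a) ^ 2 :=
        Nat.sq_le_two_mul_mul_add_sq_tsub hDS
    _ ≤ 2 * a * (#(S \ I) + #(G.edgesWithin (S \ I))) := by rw [mul_add]; omega
    _ ≤ 2 * a * #(G.edgesWithin S) :=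
      Nat.mul_le_mul_left _ (card_sdiff_add_card_edgesWithin_sdiff_le hIS hdom)

theorem exists_le_ncard_edgeSet_eq_cliqueFree_compl_sup [Fintype V] [DecidableEq V]
    {q t m k : ℕ} (hq : 0 < q) (hk : q * k ≤ #G.edgeFinset)
    (hm : ∀ S : Finset V, #S = t → m ≤ #(G.edgesWithin S))
    (hcount : (Fintype.card V).choose t < q ^ m) :
    ∃ P ≤ G, P.edgeSet.ncard = k ∧ (Gᶜ ⊔ P).CliqueFree t := by
  set 𝒜 := (univ.powersetCard t).image G.edgesWithin
  have h𝒜 : ∀ A ∈ 𝒜, A ⊆ G.edgeFinset ∧ m ≤ #A := by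
    simp only [𝒜, mem_image, mem_powersetCard, forall_exists_index, and_imp]
    rintro _ S - hS rfl
    exact ⟨edgesWithin_univ (G := G) ▸ edgesWithin_mono (subset_univ S), hm S hS⟩
  have hcard : #𝒜 < q ^ m :=
    calc #𝒜 ≤ #(univ.powersetCard t) := card_image_le
      _ = (Fintype.card V).choose t := by rw [card_powersetCard, card_univ]
      _ < q ^ m := hcount
  obtain ⟨F, hF, hFfree⟩ := exists_mem_powersetCard_forall_not_subset hq hk h𝒜 hcard
  obtain ⟨hFG, hFk⟩ := mem_powersetCard.mp hF
  have hFG' : (F : Set (Sym2 V)) ⊆ G.edgeSet := by rw [← coe_edgeFinset]; exact_mod_cast hFG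
  have hFedge : (fromEdgeSet (F : Set (Sym2 V))).edgeSet = F := by
    rw [edgeSet_fromEdgeSet, sdiff_eq_left]
    exact Set.disjoint_left.mpr fun e he => G.not_isDiag_of_mem_edgeSet (hFG' he)
  refine ⟨fromEdgeSet F, G.fromEdgeSet_le.mpr (Set.sdiff_subset.trans hFG'), ?_, fun K hK => ?_⟩
  · rw [hFedge, Set.ncard_coe_finset, hFk]
  · refine hFfree _ (mem_image_of_mem _ (mem_powersetCard.mpr ⟨subset_univ K, hK.card_eq⟩)) ?_
    have := coe_edgesWithin_subset_edgeSet_of_isClique_compl_sup hK.isClique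
    rw [hFedge] at this
    exact_mod_cast this

theorem exists_le_sixteen_mul_ncard_cliqueFree_compl_sup [Fintype V] [DecidableEq V] {t : ℕ}
    (ht : t ≤ Fintype.card V) (hL : 20 ≤ Real.logb 2 (Fintype.card V))
    (hα : G.indepNum * Real.logb 2 (Fintype.card V) < t) :
    ∃ P ≤ G, G.edgeSet.ncard ≤ 16 * P.edgeSet.ncard ∧ (Gᶜ ⊔ P).CliqueFree t := by
  set L := Real.logb 2 (Fintype.card V)
  have hV : 0 < Fintype.card V := by
    by_contra! h
    norm_num [L, Nat.le_zero.mp h] at hL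
  have : Nonempty V := Fintype.card_pos_iff.mp hV
  set a := G.indepNum
  have ha : 1 ≤ a := G.one_le_indepNum
  set m := (t - a) ^ 2 / (2 * a)
  have hm : ∀ S : Finset V, #S = t → m ≤ #(G.edgesWithin S) := fun S hS =>
    Nat.div_le_of_le_mul
      (hS ▸ sq_card_sub_le_two_mul_card_edgesWithin (fun I hI => hI.card_le_indepNum) S)
  have htm : t * L < 3 * m := mul_lt_three_mul_sq_sub_div ha hL hα
  have hcount : (Fintype.card V).choose t < 8 ^ m := by
    rw [show 8 ^ m = 2 ^ (3 * m) by rw [pow_mul]; rfl]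
    exact Nat.choose_lt_two_pow_of_mul_logb_lt hV (by exact_mod_cast htm)
  have he : 8 ≤ #G.edgeFinset := by
    obtain ⟨S, -, hS⟩ := exists_subset_card_eq (s := (univ : Finset V)) (n := t)
      (by rwa [card_univ])
    have hm8 : 8 ≤ m := by
      have : (1 : ℝ) ≤ a := by exact_mod_cast ha
      have : (8 : ℝ) ≤ m := by nlinarith
      exact_mod_cast this
    calc 8 ≤ m := hm8
      _ ≤ #(G.edgesWithin S) := hm S hS
      _ ≤ #(G.edgesWithin univ) := card_le_card (edgesWithin_mono (subset_univ S))
      _ = #G.edgeFinset := by rw [edgesWithin_univ]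
  obtain ⟨P, hPG, hPk, hPfree⟩ := exists_le_ncard_edgeSet_eq_cliqueFree_compl_sup
    (q := 8) (k := #G.edgeFinset / 8) (by norm_num) (Nat.mul_div_le _ _) hm hcount
  refine ⟨P, hPG, ?_, hPfree⟩
  rw [hPk, ← coe_edgeFinset, Set.ncard_coe_finset]
  omega

end SimpleGraph

lemma indepNumber_eq_indepNum {V : Type*} (G : SimpleGraph V) : indepNumber G = G.indepNum :=
  SimpleGraph.cliqueNum_compl

lemma exists_ncard_edgeSet_eq_RT {s n : ℕ} {x : ℝ}
    (h : ∃ G : SimpleGraph (Fin n), G.CliqueFree s ∧ (indepNumber G : ℝ) < x) :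
    ∃ G : SimpleGraph (Fin n), G.CliqueFree s ∧ (indepNumber G : ℝ) < x ∧
      G.edgeSet.ncard = RT s x n := by
  obtain ⟨G, hG, hGx⟩ := h
  refine Nat.sSup_mem (s := {m | ∃ G : SimpleGraph (Fin n),
    G.CliqueFree s ∧ (indepNumber G : ℝ) < x ∧ G.edgeSet.ncard = m}) ⟨_, G, hG, hGx, rfl⟩ ?_
  refine ((Set.finite_range fun G : SimpleGraph (Fin n) => G.edgeSet.ncard).subset ?_).bddAbove
  rintro _ ⟨G, -, -, rfl⟩
  exact ⟨G, rfl⟩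

lemma RT_eq_zero {s n : ℕ} {x : ℝ}
    (h : ¬∃ G : SimpleGraph (Fin n), G.CliqueFree s ∧ (indepNumber G : ℝ) < x) :
    RT s x n = 0 := by
  rw [RT, ← Nat.bot_eq_zero, ← csSup_empty]
  congr 1
  refine Set.eq_empty_of_forall_notMem ?_
  rintro m ⟨G, hG, hGx, -⟩
  exact h ⟨G, hG, hGx⟩

lemma exists_indepNumber_eq_invRamsey {s : ℕ} (hs : 2 ≤ s) (n : ℕ) :
    ∃ G : SimpleGraph (Fin n), G.CliqueFree s ∧ indepNumber G = invRamsey s n :=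
  Nat.sInf_mem (s := {a | ∃ G : SimpleGraph (Fin n), G.CliqueFree s ∧ indepNumber G = a})
    ⟨_, ⊥, SimpleGraph.cliqueFree_bot hs, rfl⟩

lemma isRBP_sdiff_compl {n : ℕ} {G P : SimpleGraph (Fin n)} (h : P ≤ G) :
    IsRBP (G \ P) Gᶜ P :=
  ⟨by rw [sup_right_comm, sdiff_sup_cancel h, sup_compl_eq_top],
    disjoint_compl_right.mono_left sdiff_le, disjoint_sdiff_self_left,
    disjoint_compl_left.mono_right h⟩

lemma isSTFree_sdiff_compl {n s t : ℕ} {G P : SimpleGraph (Fin n)} (h : P ≤ G)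
    (hG : G.CliqueFree s) (hP : (Gᶜ ⊔ P).CliqueFree t) : IsSTFree (G \ P) Gᶜ P s t :=
  ⟨by rwa [sdiff_sup_cancel h], hP⟩

lemma twenty_le_logb_two {n : ℕ} (hn : 2 ^ 20 ≤ n) : (20 : ℝ) ≤ Real.logb 2 n := by
  calc (20 : ℝ) = Real.logb 2 ((2 : ℝ) ^ 20) := by
        rw [Real.logb_pow, Real.logb_self_eq_one one_lt_two, mul_one]; norm_num
    _ ≤ Real.logb 2 n :=
      Real.logb_le_logb_of_le one_lt_two (by positivity) (by exact_mod_cast hn)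

theorem statement15 :
    ∃ p : ℝ, 0 < p ∧ ∀ s : ℕ, 3 ≤ s → ∃ n₀ : ℕ, ∀ n : ℕ, n₀ ≤ n →
      ∀ t : ℕ, (invRamsey s n : ℝ) * Real.logb 2 (n : ℝ) ≤ (t : ℝ) → t ≤ n →
      ∃ R B P : SimpleGraph (Fin n), IsRBP R B P ∧ IsSTFree R B P s t ∧
        p * (RT s ((t : ℝ) / Real.logb 2 (n : ℝ)) n : ℝ) ≤ (P.edgeSet.ncard : ℝ) := by
  refine ⟨1 / 16, by norm_num, fun s hs => ⟨2 ^ 20, fun n hn t ht htn => ?_⟩⟩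
  have hL := twenty_le_logb_two hn
  by_cases hM : ∃ G : SimpleGraph (Fin n), G.CliqueFree s ∧ (indepNumber G : ℝ) < t / Real.logb 2 n
  · obtain ⟨G, hGs, hGα, hGRT⟩ := exists_ncard_edgeSet_eq_RT hM
    rw [indepNumber_eq_indepNum, lt_div_iff₀ (by linarith)] at hGα
    classical
    obtain ⟨P, hPG, hGP, hPt⟩ := G.exists_le_sixteen_mul_ncard_cliqueFree_compl_sup (t := t)
      (by simpa using htn) (by simpa using hL) (by simpa using hGα)
    refine ⟨G \ P, Gᶜ, P, isRBP_sdiff_compl hPG, isSTFree_sdiff_compl hPG hGs hPt, ?_⟩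
    have : (G.edgeSet.ncard : ℝ) ≤ 16 * P.edgeSet.ncard := by exact_mod_cast hGP
    rw [← hGRT]
    linarith
  · obtain ⟨W, hWs, hWα⟩ := exists_indepNumber_eq_invRamsey (by omega : 2 ≤ s) n
    have : Nonempty (Fin n) := Fin.pos_iff_nonempty.mp (by omega)
    have hα1 : (1 : ℝ) ≤ W.indepNum := by exact_mod_cast W.one_le_indepNum
    rw [← hWα, indepNumber_eq_indepNum] at ht
    have hαt : W.indepNum < t := by exact_mod_cast (by nlinarith : (W.indepNum : ℝ) < t)
    refine ⟨W \ ⊥, Wᶜ, ⊥, isRBP_sdiff_compl bot_le, isSTFree_sdiff_compl bot_le hWs ?_, ?_⟩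
    · rw [sup_bot_eq]
      exact SimpleGraph.cliqueFree_compl_of_indepNum_lt hαt
    · simp [RT_eq_zero hM]
end
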